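/- arXiv:2203.11672 — 2 statements merged into one kernel-verified Lean document; each statement's English description precedes it below -/
import Mathlib

section
/- The space P₂ of homogeneous polynomials of degree 2 in R is the internal direct sum of the seven subspaces V₀⁺, V₀⁻, V₁⁺, V₁⁻, V₂⁺, V₂⁻, V₃ (i.e., these subspaces form an independent family whose sum is all of P₂), and each of the seven subspaces is invariant under both S and T. -/
open MvPolynomial

noncomputable section

abbrev R6 : Type := MvPolynomial (Fin 6) ℂ

/-- `ε = exp(2πi/6)`, a primitive 6th root of unity. -/
def ε : ℂ := Complex.exp (2 * Real.pi * Complex.I / 6)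

/-- The Heisenberg generator `S`, the `ℂ`-algebra map with `S xᵢ = x_{i+1 mod 6}`. -/
def Sh : R6 →ₐ[ℂ] R6 := aeval fun i : Fin 6 => X (i + 1)

/-- The Heisenberg generator `T`, the `ℂ`-algebra map with `T xᵢ = εⁱ xᵢ`. -/
def Tw : R6 →ₐ[ℂ] R6 := aeval fun i : Fin 6 => C (ε ^ (i : ℕ)) * X i

/-- The space of homogeneous polynomials of degree 2. -/
def P2 : Submodule ℂ R6 := homogeneousSubmodule (Fin 6) ℂ 2

def V0p : Submodule ℂ R6 :=
  Submodule.span ℂ {X 0 ^ 2 + X 3 ^ 2, X 1 ^ 2 + X 4 ^ 2, X 2 ^ 2 + X 5 ^ 2}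
def V0m : Submodule ℂ R6 :=
  Submodule.span ℂ {X 0 ^ 2 - X 3 ^ 2, X 1 ^ 2 - X 4 ^ 2, X 2 ^ 2 - X 5 ^ 2}
def V1p : Submodule ℂ R6 :=
  Submodule.span ℂ {X 0 * X 1 + X 3 * X 4, X 1 * X 2 + X 4 * X 5, X 2 * X 3 + X 5 * X 0}
def V1m : Submodule ℂ R6 :=
  Submodule.span ℂ {X 0 * X 1 - X 3 * X 4, X 1 * X 2 - X 4 * X 5, X 2 * X 3 - X 5 * X 0}
def V2p : Submodule ℂ R6 :=
  Submodule.span ℂ {X 0 * X 2 + X 3 * X 5, X 1 * X 3 + X 4 * X 0, X 2 * X 4 + X 5 * X 1}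
def V2m : Submodule ℂ R6 :=
  Submodule.span ℂ {X 0 * X 2 - X 3 * X 5, X 1 * X 3 - X 4 * X 0, X 2 * X 4 - X 5 * X 1}
def V3 : Submodule ℂ R6 :=
  Submodule.span ℂ {X 0 * X 3, X 1 * X 4, X 2 * X 5}

/-- The seven subspaces of `P₂`, as a family indexed by `Fin 7`. -/
def Vfam : Fin 7 → Submodule ℂ R6 := ![V0p, V0m, V1p, V1m, V2p, V2m, V3]

/-!
Write `x_i x_{i+k} + s x_{i+3} x_{i+3+k}` (indices in `ℤ/6`, `s = ±1`) for the generators of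
`V_k^±`, and `x_i x_{i+3}` for those of `V₃`. `S` shifts `i` by one and, because `ε⁶ = 1`, `T`
multiplies each generator by `ε^(2i+k)`; shifting `i` by three multiplies a generator by `s`, so
each `V` is spanned by the orbit of its generators and is invariant. Every monomial `x_i x_j` is
half the sum of a `V⁺` and a `V⁻` generator (or lies in `V₃`), so the seven spaces span `P₂`.
Since `dim P₂ = C(7,2) = 21 = 7 · 3`, the sum is direct.
-/

open Module Submodule

theorem pow_finVal_add {M : Type*} [Monoid M] {ζ : M} {n : ℕ} (h : ζ ^ n = 1) (a b : Fin n) :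
    ζ ^ ((a + b : Fin n) : ℕ) = ζ ^ (a : ℕ) * ζ ^ (b : ℕ) := by
  rw [Fin.val_add, ← pow_eq_pow_mod _ h, pow_add]

theorem finrank_span_triple_le {K M : Type*} [DivisionRing K] [AddCommGroup M] [Module K M]
    (a b c : M) : finrank K (span K {a, b, c}) ≤ 3 := by
  classical
  have h := finrank_span_finset_le_card (R := K) ({a, b, c} : Finset M)
  rw [Finset.coe_insert, Finset.coe_insert, Finset.coe_singleton] at h
  exact h.trans Finset.card_le_three

theorem span_range_eq_span_three {R M : Type*} [Semiring R] [AddCommMonoid M] [Module R M]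
    (g : Fin 6 → M) (c : R) (h : ∀ i, g (i + 3) = c • g i) :
    span R (Set.range g) = span R {g 0, g 1, g 2} := by
  refine le_antisymm (span_le.mpr ?_) (span_mono ?_)
  · have hlow : ∀ j ∈ ({0, 1, 2} : Finset (Fin 6)), g j ∈ span R {g 0, g 1, g 2} := by
      intro j hj
      apply subset_span
      fin_cases hj <;> simp
    rintro _ ⟨i, rfl⟩
    obtain ⟨j, hj, rfl | rfl⟩ : ∃ j ∈ ({0, 1, 2} : Finset (Fin 6)), i = j ∨ i = j + 3 := by
      revert i; decide
    · exact hlow _ hj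
    · rw [h]
      exact smul_mem _ c (hlow j hj)
  · rintro _ (rfl | rfl | rfl) <;> exact Set.mem_range_self _

theorem iSupIndep_of_sum_finrank_le {K V ι : Type*} [DivisionRing K] [AddCommGroup V]
    [Module K V] [Fintype ι] (p : ι → Submodule K V) [∀ i, FiniteDimensional K (p i)]
    (h : ∑ i, finrank K (p i) ≤ finrank K ↥(⨆ i, p i)) : iSupIndep p := by
  classical
  set φ := DFinsupp.lsum ℕ fun i => (p i).subtype
  have hrange : LinearMap.range φ = ⨆ i, p i := (iSup_eq_range_dfinsupp_lsum p).symm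
  have hdom : finrank K (Π₀ i, p i) = ∑ i, finrank K (p i) := finrank_directSum K fun i => p i
  have hker : finrank K (LinearMap.ker φ) = 0 := by
    have := φ.finrank_range_add_finrank_ker
    rw [hrange, hdom] at this
    omega
  refine iSupIndep_of_dfinsupp_lsum_injective p ?_
  rw [← LinearMap.ker_eq_bot]
  exact finrank_eq_zero.mp hker

theorem finrank_homogeneousSubmodule {σ R : Type*} [Fintype σ] [CommRing R] [Nontrivial R]
    (n : ℕ) :
    finrank R (homogeneousSubmodule σ R n) = (Fintype.card σ + n - 1).choose n := by
  classical
  rw [homogeneousSubmodule_eq_finsupp_supported]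
  refine (finrank_eq_nat_card_basis (basisRestrictSupport R {d : σ →₀ ℕ | d.degree = n})).trans ?_
  rw [← Sym.card_sym_eq_choose, ← Nat.card_eq_fintype_card]
  exact Nat.card_congr ((Sym.equivNatSum σ n).trans (Equiv.subtypeEquivRight fun d => Iff.rfl)).symm

theorem homogeneousSubmodule_two_eq_span {σ R : Type*} [CommSemiring R] :
    homogeneousSubmodule σ R 2 = span R (Set.range fun p : σ × σ => X p.1 * X p.2) := by
  classical
  refine le_antisymm ?_ (span_le.mpr ?_)
  · rw [homogeneousSubmodule_eq_finsupp_supported, ← restrictSupport, restrictSupport_eq_span]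
    refine span_mono ?_
    rintro _ ⟨d, hd, rfl⟩
    obtain ⟨i, j, hij⟩ := Multiset.card_eq_two.mp
      (show Multiset.card (Finsupp.toMultiset d) = 2 by rw [Finsupp.card_toMultiset]; exact hd)
    refine ⟨(i, j), ?_⟩
    rw [← Finsupp.toMultiset_toFinsupp d, hij]
    simp [X, monomial_mul, Multiset.insert_eq_cons, ← Multiset.singleton_add]
  · rintro _ ⟨⟨i, j⟩, rfl⟩
    exact (isHomogeneous_X R i).mul (isHomogeneous_X R j)

theorem ε_pow_six : ε ^ 6 = 1 := by
  simpa [ε] using (Complex.isPrimitiveRoot_exp 6 (by norm_num)).pow_eq_one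

def quadMono (k i : Fin 6) : R6 := X i * X (i + k)

def quadPair (s : ℂ) (k i : Fin 6) : R6 := quadMono k i + s • quadMono k (i + 3)

def Vgen : Fin 7 → Fin 6 → R6 :=
  ![quadPair 1 0, quadPair (-1) 0, quadPair 1 1, quadPair (-1) 1, quadPair 1 2, quadPair (-1) 2,
    quadMono 3]

theorem Vgen_eq_quadPair_or_quadMono (j : Fin 7) :
    (∃ s k, s * s = 1 ∧ Vgen j = quadPair s k) ∨ Vgen j = quadMono 3 := by
  fin_cases j
  all_goals first
    | exact .inr rfl
    | exact .inl ⟨_, _, by norm_num, rfl⟩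

theorem add_three_add_three (i : Fin 6) : i + 3 + 3 = i := by
  rw [add_assoc]; exact add_zero i

theorem quadMono_neg_add (k i : Fin 6) : quadMono (-k) (i + k) = quadMono k i := by
  rw [quadMono, quadMono, add_neg_cancel_right, mul_comm]

theorem quadMono_three_add_three (i : Fin 6) : quadMono 3 (i + 3) = quadMono 3 i := by
  rw [quadMono, quadMono, add_three_add_three, mul_comm]

theorem quadPair_add_three {s : ℂ} (hs : s * s = 1) (k i : Fin 6) :
    quadPair s k (i + 3) = s • quadPair s k i := by
  rw [quadPair, quadPair, add_three_add_three, smul_add, smul_smul, hs, one_smul, add_comm]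

theorem Vgen_add_three (j : Fin 7) : ∃ c : ℂ, ∀ i, Vgen j (i + 3) = c • Vgen j i := by
  rcases Vgen_eq_quadPair_or_quadMono j with ⟨s, k, hs, h⟩ | h <;> rw [h]
  · exact ⟨s, quadPair_add_three hs k⟩
  · exact ⟨1, fun i => by rw [one_smul, quadMono_three_add_three]⟩

theorem Vfam_eq_span_three (j : Fin 7) : Vfam j = span ℂ {Vgen j 0, Vgen j 1, Vgen j 2} := by
  fin_cases j <;> simp [Vfam, Vgen, V0p, V0m, V1p, V1m, V2p, V2m, V3, quadPair, quadMono, sq,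
    sub_eq_add_neg]

theorem Vfam_eq_span_range (j : Fin 7) : Vfam j = span ℂ (Set.range (Vgen j)) := by
  obtain ⟨c, hc⟩ := Vgen_add_three j
  rw [span_range_eq_span_three _ c hc, Vfam_eq_span_three]

theorem Sh_quadMono (k i : Fin 6) : Sh (quadMono k i) = quadMono k (i + 1) := by
  simp only [quadMono, Sh, map_mul, aeval_X, add_right_comm]

theorem Sh_quadPair (s : ℂ) (k i : Fin 6) : Sh (quadPair s k i) = quadPair s k (i + 1) := by
  rw [quadPair, map_add, map_smul, Sh_quadMono, Sh_quadMono, quadPair, add_right_comm]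

theorem Sh_Vgen (j : Fin 7) (i : Fin 6) : Sh (Vgen j i) = Vgen j (i + 1) := by
  rcases Vgen_eq_quadPair_or_quadMono j with ⟨s, k, -, h⟩ | h <;> rw [h]
  exacts [Sh_quadPair s k i, Sh_quadMono 3 i]

theorem Tw_quadMono (k i : Fin 6) :
    Tw (quadMono k i) = (ε ^ (i : ℕ) * ε ^ ((i + k : Fin 6) : ℕ)) • quadMono k i := by
  simp only [quadMono, Tw, map_mul, aeval_X, smul_eq_C_mul]
  ring

theorem Tw_quadPair (s : ℂ) (k i : Fin 6) :
    Tw (quadPair s k i) = (ε ^ (i : ℕ) * ε ^ ((i + k : Fin 6) : ℕ)) • quadPair s k i := by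
  have hshift : ε ^ ((i + 3 : Fin 6) : ℕ) * ε ^ ((i + 3 + k : Fin 6) : ℕ) =
      ε ^ (i : ℕ) * ε ^ ((i + k : Fin 6) : ℕ) := by
    rw [add_right_comm, pow_finVal_add ε_pow_six, pow_finVal_add ε_pow_six (i + k),
      show ((3 : Fin 6) : ℕ) = 3 from rfl]
    linear_combination (ε ^ (i : ℕ) * ε ^ ((i + k : Fin 6) : ℕ)) * ε_pow_six
  rw [quadPair, map_add, map_smul, Tw_quadMono, Tw_quadMono, hshift, smul_add, smul_comm]

theorem Tw_Vgen (j : Fin 7) (i : Fin 6) : ∃ c : ℂ, Tw (Vgen j i) = c • Vgen j i := by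
  rcases Vgen_eq_quadPair_or_quadMono j with ⟨s, k, -, h⟩ | h <;> rw [h]
  exacts [⟨_, Tw_quadPair s k i⟩, ⟨_, Tw_quadMono 3 i⟩]

theorem map_Sh_Vfam_le (j : Fin 7) : (Vfam j).map Sh.toLinearMap ≤ Vfam j := by
  rw [Vfam_eq_span_range, map_span_le]
  rintro _ ⟨i, rfl⟩
  rw [AlgHom.toLinearMap_apply, Sh_Vgen]
  exact subset_span (Set.mem_range_self _)

theorem map_Tw_Vfam_le (j : Fin 7) : (Vfam j).map Tw.toLinearMap ≤ Vfam j := by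
  rw [Vfam_eq_span_range, map_span_le]
  rintro _ ⟨i, rfl⟩
  obtain ⟨c, hc⟩ := Tw_Vgen j i
  rw [AlgHom.toLinearMap_apply, hc]
  exact smul_mem _ c (subset_span (Set.mem_range_self _))

theorem quadMono_mem_P2 (k i : Fin 6) : quadMono k i ∈ P2 :=
  (isHomogeneous_X ℂ i).mul (isHomogeneous_X ℂ (i + k))

theorem Vfam_le_P2 (j : Fin 7) : Vfam j ≤ P2 := by
  rw [Vfam_eq_span_range, span_le]
  rintro _ ⟨i, rfl⟩
  rcases Vgen_eq_quadPair_or_quadMono j with ⟨s, k, -, h⟩ | h <;> rw [h]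
  · exact add_mem (quadMono_mem_P2 k i) (smul_mem _ s (quadMono_mem_P2 k (i + 3)))
  · exact quadMono_mem_P2 3 i

theorem Vgen_mem_iSup_Vfam (j : Fin 7) (i : Fin 6) : Vgen j i ∈ ⨆ j, Vfam j :=
  le_iSup Vfam j (by rw [Vfam_eq_span_range]; exact subset_span (Set.mem_range_self i))

theorem quadMono_mem_iSup_Vfam (k i : Fin 6) : quadMono k i ∈ ⨆ j, Vfam j := by
  have of_pairs : ∀ k i, quadPair 1 k i ∈ ⨆ j, Vfam j → quadPair (-1) k i ∈ ⨆ j, Vfam j →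
      quadMono k i ∈ ⨆ j, Vfam j := by
    intro k i hp hm
    have hsum : quadMono k i = (2⁻¹ : ℂ) • (quadPair 1 k i + quadPair (-1) k i) := by
      rw [quadPair, quadPair, one_smul, neg_one_smul, add_add_add_comm, add_neg_cancel,
        add_zero, ← two_smul ℂ, smul_smul, inv_mul_cancel₀ two_ne_zero, one_smul]
    rw [hsum]
    exact smul_mem _ _ (add_mem hp hm)
  fin_cases k
  · exact of_pairs _ _ (Vgen_mem_iSup_Vfam 0 i) (Vgen_mem_iSup_Vfam 1 i)
  · exact of_pairs _ _ (Vgen_mem_iSup_Vfam 2 i) (Vgen_mem_iSup_Vfam 3 i)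
  · exact of_pairs _ _ (Vgen_mem_iSup_Vfam 4 i) (Vgen_mem_iSup_Vfam 5 i)
  · exact Vgen_mem_iSup_Vfam 6 i
  -- in `Fin 6`, `-4 = 2` and `-5 = 1`
  · rw [← quadMono_neg_add]
    exact of_pairs _ _ (Vgen_mem_iSup_Vfam 4 _) (Vgen_mem_iSup_Vfam 5 _)
  · rw [← quadMono_neg_add]
    exact of_pairs _ _ (Vgen_mem_iSup_Vfam 2 _) (Vgen_mem_iSup_Vfam 3 _)

theorem P2_le_iSup_Vfam : P2 ≤ ⨆ j, Vfam j := by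
  rw [P2, homogeneousSubmodule_two_eq_span, span_le]
  rintro _ ⟨⟨i, j⟩, rfl⟩
  simpa [quadMono] using quadMono_mem_iSup_Vfam (j - i) i

theorem finrank_P2 : finrank ℂ P2 = 21 := by
  rw [P2, finrank_homogeneousSubmodule, Fintype.card_fin]
  rfl

instance finiteDimensional_Vfam (j : Fin 7) : FiniteDimensional ℂ (Vfam j) := by
  rw [Vfam_eq_span_three]
  exact FiniteDimensional.span_of_finite ℂ (Set.toFinite _)

theorem finrank_Vfam_le (j : Fin 7) : finrank ℂ (Vfam j) ≤ 3 := by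
  rw [Vfam_eq_span_three]
  exact finrank_span_triple_le _ _ _

/-- `P₂` is the internal direct sum of the seven subspaces `V₀⁺, V₀⁻, V₁⁺, V₁⁻, V₂⁺, V₂⁻, V₃`,
and each of the seven is invariant under both `S` and `T`. -/
theorem P2_direct_sum_decomposition :
    iSupIndep Vfam ∧ (⨆ i, Vfam i) = P2 ∧
    (∀ i, Submodule.map Sh.toLinearMap (Vfam i) ≤ Vfam i ∧
      Submodule.map Tw.toLinearMap (Vfam i) ≤ Vfam i) := by
  have hsup : (⨆ i, Vfam i) = P2 := le_antisymm (iSup_le Vfam_le_P2) P2_le_iSup_Vfam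
  refine ⟨iSupIndep_of_sum_finrank_le Vfam ?_, hsup,
    fun j => ⟨map_Sh_Vfam_le j, map_Tw_Vfam_le j⟩⟩
  calc ∑ j, finrank ℂ (Vfam j) ≤ ∑ _j : Fin 7, 3 :=
        Finset.sum_le_sum fun j _ => finrank_Vfam_le j
    _ = finrank ℂ P2 := by rw [finrank_P2]; rfl
    _ = finrank ℂ ↥(⨆ i, Vfam i) := by rw [hsup]
end
end

section
/- The subspace W = V₀⁺ + V₀⁻ + V₂⁺ + V₂⁻ of P₂ contains V_τ = span{x₀², x₃², x₂x₄, x₅x₁}, is invariant under S and T, and is contained in every subspace of P₂ that contains V_τ and is invariant under S and T; i.e., W is the smallest S- and T-invariant subspace of P₂ containing the T-fixed space V_τ. -/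
open MvPolynomial

noncomputable section

/-- The `T`-fixed space `V_τ = span {x₀², x₃², x₂x₄, x₅x₁}`. -/
def Vtau : Submodule ℂ R6 := Submodule.span ℂ {X 0 ^ 2, X 3 ^ 2, X 2 * X 4, X 5 * X 1}

/-! `W` is the span of the twelve monomials `xᵢxⱼ` with `i ≡ j (mod 2)`, i.e. of the `xᵢ²` and
`xᵢxᵢ₊₂`: each generator of the `V`'s is a sum or difference of two of them, and conversely each
of them is a half-sum or half-difference of two generators. `S` permutes these monomials and `T`
rescales each of them, and they are the `S`-orbits of `x₀²` and `x₂x₄`, both of which lie in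
`V_τ`. -/

open Submodule

theorem Submodule.mem_and_mem_of_add_mem_of_sub_mem {R M : Type*} [Ring R] [Invertible (2 : R)]
    [AddCommGroup M] [Module R M] {U : Submodule R M} {a b : M} (hadd : a + b ∈ U)
    (hsub : a - b ∈ U) : a ∈ U ∧ b ∈ U := by
  have ha : a = ⅟(2 : R) • ((a + b) + (a - b)) := by
    rw [add_add_sub_cancel, ← two_smul R a, smul_smul, invOf_mul_self, one_smul]
  have hb : b = ⅟(2 : R) • ((a + b) - (a - b)) := by
    rw [add_sub_sub_cancel, ← two_smul R b, smul_smul, invOf_mul_self, one_smul]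
  exact ⟨ha ▸ U.smul_mem _ (add_mem hadd hsub), hb ▸ U.smul_mem _ (sub_mem hadd hsub)⟩

open Fin.NatCast in
theorem Fin.add_one_induction {n : ℕ} [NeZero n] {P : Fin n → Prop} {a : Fin n} (ha : P a)
    (hsucc : ∀ i, P i → P (i + 1)) (i : Fin n) : P i := by
  have hiter : ∀ k : ℕ, P (a + (k : Fin n)) := by
    intro k
    induction k with
    | zero => simpa using ha
    | succ k ih => simpa [add_assoc] using hsucc _ ih
  simpa using hiter (i - a).val

theorem Sh_X (i : Fin 6) : Sh (X i) = X (i + 1) := by simp [Sh]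

theorem Tw_X_mul_X (i j : Fin 6) : Tw (X i * X j) = ε ^ ((i : ℕ) + j) • (X i * X j) := by
  simp only [Tw, map_mul, aeval_X, smul_eq_C_mul, pow_add]
  ring

def sameParityMonomials : Set R6 :=
  Set.range (fun i : Fin 6 => X i ^ 2) ∪ Set.range fun i => X i * X (i + 2)

theorem span_sameParityMonomials_le_P2 : span ℂ sameParityMonomials ≤ P2 := by
  refine span_le.mpr (Set.union_subset ?_ ?_) <;> rintro _ ⟨i, rfl⟩
  · exact isHomogeneous_X_pow i 2
  · exact (isHomogeneous_X ℂ i).mul (isHomogeneous_X ℂ (i + 2))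

theorem map_Sh_span_sameParityMonomials_le :
    (span ℂ sameParityMonomials).map Sh.toLinearMap ≤
      span ℂ sameParityMonomials := by
  refine (map_span_le _ _ _).mpr fun p hp => subset_span ?_
  rcases hp with ⟨i, rfl⟩ | ⟨i, rfl⟩
  · exact Or.inl ⟨i + 1, by simp [Sh_X]⟩
  · exact Or.inr ⟨i + 1, by simp [Sh_X, add_right_comm]⟩

theorem map_Tw_span_sameParityMonomials_le :
    (span ℂ sameParityMonomials).map Tw.toLinearMap ≤
      span ℂ sameParityMonomials := by
  refine (map_span_le _ _ _).mpr fun p hp => ?_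
  rcases hp with ⟨i, rfl⟩ | ⟨i, rfl⟩ <;> dsimp only
  · rw [AlgHom.toLinearMap_apply, sq, Tw_X_mul_X, ← sq]
    exact smul_mem _ _ (subset_span (Or.inl ⟨i, rfl⟩))
  · rw [AlgHom.toLinearMap_apply, Tw_X_mul_X]
    exact smul_mem _ _ (subset_span (Or.inr ⟨i, rfl⟩))

theorem Vtau_le_span_sameParityMonomials : Vtau ≤ span ℂ sameParityMonomials := by
  refine span_mono ?_
  simp only [Set.insert_subset_iff, Set.singleton_subset_iff]
  exact ⟨Or.inl ⟨0, rfl⟩, Or.inl ⟨3, rfl⟩, Or.inr ⟨2, rfl⟩, Or.inr ⟨5, rfl⟩⟩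

theorem span_sameParityMonomials_le_of_map_Sh_le {U : Submodule ℂ R6}
    (hS : U.map Sh.toLinearMap ≤ U) (h0 : X 0 ^ 2 ∈ U) (h24 : X 2 * X 4 ∈ U) :
    span ℂ sameParityMonomials ≤ U := by
  have hstep : ∀ p ∈ U, Sh p ∈ U := fun p hp => hS ⟨p, hp, rfl⟩
  refine span_le.mpr (Set.union_subset ?_ ?_) <;> rintro _ ⟨i, rfl⟩
  · exact Fin.add_one_induction (P := fun j => X j ^ 2 ∈ U) h0
      (fun j hj => by simpa [Sh_X] using hstep _ hj) i
  · exact Fin.add_one_induction (P := fun j => X j * X (j + 2) ∈ U) h24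
      (fun j hj => by simpa [Sh_X, add_right_comm] using hstep _ hj) i

theorem V0p_sup_V0m_sup_V2p_sup_V2m_le_span_sameParityMonomials :
    V0p ⊔ V0m ⊔ V2p ⊔ V2m ≤ span ℂ sameParityMonomials := by
  have hsq (i : Fin 6) : X i ^ 2 ∈ span ℂ sameParityMonomials := subset_span (Or.inl ⟨i, rfl⟩)
  have hadj (i : Fin 6) : X i * X (i + 2) ∈ span ℂ sameParityMonomials :=
    subset_span (Or.inr ⟨i, rfl⟩)
  refine sup_le (sup_le (sup_le ?_ ?_) ?_) ?_ <;> refine span_le.mpr ?_ <;>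
    simp only [Set.insert_subset_iff, Set.singleton_subset_iff, SetLike.mem_coe]
  · exact ⟨add_mem (hsq 0) (hsq 3), add_mem (hsq 1) (hsq 4), add_mem (hsq 2) (hsq 5)⟩
  · exact ⟨sub_mem (hsq 0) (hsq 3), sub_mem (hsq 1) (hsq 4), sub_mem (hsq 2) (hsq 5)⟩
  · exact ⟨add_mem (hadj 0) (hadj 3), add_mem (hadj 1) (hadj 4), add_mem (hadj 2) (hadj 5)⟩
  · exact ⟨sub_mem (hadj 0) (hadj 3), sub_mem (hadj 1) (hadj 4), sub_mem (hadj 2) (hadj 5)⟩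

theorem span_sameParityMonomials_le_V0p_sup_V0m_sup_V2p_sup_V2m :
    span ℂ sameParityMonomials ≤ V0p ⊔ V0m ⊔ V2p ⊔ V2m := by
  set W := V0p ⊔ V0m ⊔ V2p ⊔ V2m
  have halves0 (a b : R6) (hadd : a + b ∈ V0p) (hsub : a - b ∈ V0m) : a ∈ W ∧ b ∈ W :=
    mem_and_mem_of_add_mem_of_sub_mem (mem_sup_left (mem_sup_left (mem_sup_left hadd)))
      (mem_sup_left (mem_sup_left (mem_sup_right hsub)))
  have halves2 (a b : R6) (hadd : a + b ∈ V2p) (hsub : a - b ∈ V2m) : a ∈ W ∧ b ∈ W :=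
    mem_and_mem_of_add_mem_of_sub_mem (mem_sup_left (mem_sup_right hadd)) (mem_sup_right hsub)
  obtain ⟨h0, h3⟩ := halves0 (X 0 ^ 2) (X 3 ^ 2) (subset_span (by simp)) (subset_span (by simp))
  obtain ⟨h1, h4⟩ := halves0 (X 1 ^ 2) (X 4 ^ 2) (subset_span (by simp)) (subset_span (by simp))
  obtain ⟨h2, h5⟩ := halves0 (X 2 ^ 2) (X 5 ^ 2) (subset_span (by simp)) (subset_span (by simp))
  obtain ⟨h02, h35⟩ := halves2 (X 0 * X 2) (X 3 * X 5)
    (subset_span (by simp)) (subset_span (by simp))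
  obtain ⟨h13, h40⟩ := halves2 (X 1 * X 3) (X 4 * X 0)
    (subset_span (by simp)) (subset_span (by simp))
  obtain ⟨h24, h51⟩ := halves2 (X 2 * X 4) (X 5 * X 1)
    (subset_span (by simp)) (subset_span (by simp))
  refine span_le.mpr (Set.union_subset ?_ ?_) <;>
    refine Set.range_subset_iff.mpr fun i => ?_ <;> fin_cases i <;> assumption

theorem V0p_sup_V0m_sup_V2p_sup_V2m_eq_span_sameParityMonomials :
    V0p ⊔ V0m ⊔ V2p ⊔ V2m = span ℂ sameParityMonomials :=
  le_antisymm V0p_sup_V0m_sup_V2p_sup_V2m_le_span_sameParityMonomials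
    span_sameParityMonomials_le_V0p_sup_V0m_sup_V2p_sup_V2m

/-- `W = V₀⁺ + V₀⁻ + V₂⁺ + V₂⁻` is the smallest `S`- and `T`-invariant subspace of `P₂`
containing `V_τ`. -/
theorem smallest_invariant_subspace_containing_Vtau :
    Vtau ≤ V0p ⊔ V0m ⊔ V2p ⊔ V2m ∧
    (V0p ⊔ V0m ⊔ V2p ⊔ V2m : Submodule ℂ R6) ≤ P2 ∧
    Submodule.map Sh.toLinearMap (V0p ⊔ V0m ⊔ V2p ⊔ V2m) ≤ V0p ⊔ V0m ⊔ V2p ⊔ V2m ∧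
    Submodule.map Tw.toLinearMap (V0p ⊔ V0m ⊔ V2p ⊔ V2m) ≤ V0p ⊔ V0m ⊔ V2p ⊔ V2m ∧
    ∀ U : Submodule ℂ R6, U ≤ P2 → Vtau ≤ U →
      Submodule.map Sh.toLinearMap U ≤ U → Submodule.map Tw.toLinearMap U ≤ U →
      V0p ⊔ V0m ⊔ V2p ⊔ V2m ≤ U := by
  rw [V0p_sup_V0m_sup_V2p_sup_V2m_eq_span_sameParityMonomials]
  refine ⟨Vtau_le_span_sameParityMonomials, span_sameParityMonomials_le_P2,
    map_Sh_span_sameParityMonomials_le, map_Tw_span_sameParityMonomials_le,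
    fun U _ hVtau hSh _ => span_sameParityMonomials_le_of_map_Sh_le hSh ?_ ?_⟩ <;>
  exact hVtau (subset_span (by simp))
end
end
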